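/- arXiv:2010.12645 — 2 statements merged into one kernel-verified Lean document; each statement's English description precedes it below -/
import Mathlib

section
/- Let S and A be finite sets, γ ∈ [0,1), d₀ a probability distribution on S, and let M and M' be two MDPs sharing S, A, γ, d₀, with transition functions P, P' and mean reward functions R, R' bounded in absolute value by Rmax. If for all s ∈ S and a ∈ A: ∑_{s'∈S} |P(s'|s,a) − P'(s'|s,a)| ≤ ε_P and |R(s,a) − R'(s,a)| ≤ ε_R, then for every policy π, |ρ(π, M) − ρ(π, M')| ≤ γ·Rmax·ε_P/(1−γ)² + ε_R/(1−γ). -/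
open scoped BigOperators

/-- The distribution over states at time `t` when running policy `pol` in an MDP
with transition function `P` and start-state distribution `d0`. -/
noncomputable def stateDist {S A : Type*} [Fintype S] [Fintype A]
    (P : S → A → S → ℝ) (pol : S → A → ℝ) (d0 : S → ℝ) : ℕ → S → ℝ
  | 0 => d0
  | (t + 1) => fun s' => ∑ s : S, ∑ a : A, stateDist P pol d0 t s * pol s a * P s a s'

/-- The performance `ρ(π, M) = ∑_{t=0}^∞ γ^t E[R(S_t, A_t)]`. -/
noncomputable def perf {S A : Type*} [Fintype S] [Fintype A]
    (P : S → A → S → ℝ) (R : S → A → ℝ) (pol : S → A → ℝ)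
    (d0 : S → ℝ) (γ : ℝ) : ℝ :=
  ∑' t : ℕ, γ ^ t * ∑ s : S, stateDist P pol d0 t s * ∑ a : A, pol s a * R s a

/-- `P s a : S → ℝ` is a probability distribution over next states for each `(s, a)`. -/
def IsTransition {S A : Type*} [Fintype S] (P : S → A → S → ℝ) : Prop :=
  ∀ s a, (∀ s', 0 ≤ P s a s') ∧ ∑ s' : S, P s a s' = 1

/-- `pol s : A → ℝ` is a probability distribution over actions for each state `s`. -/
def IsPolicy {S A : Type*} [Fintype A] (pol : S → A → ℝ) : Prop :=
  ∀ s, (∀ a, 0 ≤ pol s a) ∧ ∑ a : A, pol s a = 1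

/-- `d0` is a probability distribution over states. -/
def IsDist {S : Type*} [Fintype S] (d0 : S → ℝ) : Prop :=
  (∀ s, 0 ≤ d0 s) ∧ ∑ s : S, d0 s = 1

/-!
Write `μₜ` and `μ'ₜ` for the state-action distributions at time `t` in the two MDPs. One step of
the chain pushes `μₜ` through the kernel `P` and `μ'ₜ` through `P'`; writing
`μP - μ'P' = (μ - μ')P + μ'(P - P')` shows that the L1 distance between the state distributions
grows by at most `εP` per step, so it is at most `t εP` at time `t`. The same splitting bounds the
difference of expected rewards at time `t` by `Rmax t εP + εR`, and summing against `γ^t`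
with `∑ t γ^t = 1/(1-γ)` and `∑ t t γ^t = γ/(1-γ)^2` gives the bound.
-/

open Finset

section Distributions

variable {ι κ : Type*} [Fintype ι] [Fintype κ]

lemma IsDist.nonempty {p : ι → ℝ} (hp : IsDist p) : Nonempty ι := by
  by_contra h
  rw [not_nonempty_iff] at h
  simpa using hp.2

lemma IsDist.abs_sum_mul_le {p f : ι → ℝ} {c : ℝ} (hp : IsDist p) (hf : ∀ i, |f i| ≤ c) :
    |∑ i, p i * f i| ≤ c := by
  calc |∑ i, p i * f i| ≤ ∑ i, p i * c := by
        refine (abs_sum_le_sum_abs _ _).trans (sum_le_sum fun i _ => ?_)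
        rw [abs_mul, abs_of_nonneg (hp.1 i)]
        exact mul_le_mul_of_nonneg_left (hf i) (hp.1 i)
    _ = c := by rw [← sum_mul, hp.2, one_mul]

lemma IsDist.joint {p : ι → ℝ} {K : ι → κ → ℝ} (hp : IsDist p) (hK : ∀ i, IsDist (K i)) :
    IsDist fun x : ι × κ => p x.1 * K x.1 x.2 := by
  refine ⟨fun x => mul_nonneg (hp.1 x.1) ((hK x.1).1 x.2), ?_⟩
  simp_rw [Fintype.sum_prod_type, ← mul_sum, fun i => (hK i).2, mul_one, hp.2]

lemma IsDist.bind {p : ι → ℝ} {K : ι → κ → ℝ} (hp : IsDist p) (hK : ∀ i, IsDist (K i)) :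
    IsDist fun j => ∑ i, p i * K i j := by
  refine ⟨fun j => sum_nonneg fun i _ => mul_nonneg (hp.1 i) ((hK i).1 j), ?_⟩
  rw [sum_comm]
  simp_rw [← mul_sum, fun i => (hK i).2, mul_one, hp.2]

lemma abs_sum_mul_sub_sum_mul_le {p q f g : ι → ℝ} {c ε : ℝ} (hq : IsDist q)
    (hf : ∀ i, |f i| ≤ c) (hfg : ∀ i, |f i - g i| ≤ ε) :
    |∑ i, p i * f i - ∑ i, q i * g i| ≤ c * ∑ i, |p i - q i| + ε := by
  calc |∑ i, p i * f i - ∑ i, q i * g i|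
      = |∑ i, ((p i - q i) * f i + q i * (f i - g i))| := by
        rw [← sum_sub_distrib]; congr 1; exact sum_congr rfl fun i _ => by ring
    _ ≤ ∑ i, (|p i - q i| * c + q i * ε) := by
        refine (abs_sum_le_sum_abs _ _).trans (sum_le_sum fun i _ => ?_)
        refine (abs_add_le _ _).trans ?_
        rw [abs_mul, abs_mul, abs_of_nonneg (hq.1 i)]
        gcongr
        · exact hf i
        · exact hq.1 i
        · exact hfg i
    _ = c * ∑ i, |p i - q i| + ε := by
        rw [sum_add_distrib, ← sum_mul, ← sum_mul, hq.2, one_mul, mul_comm]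

lemma sum_abs_bind_sub_bind_le {p q : ι → ℝ} {K L : ι → κ → ℝ} {ε : ℝ} (hq : IsDist q)
    (hK : ∀ i, IsDist (K i)) (hKL : ∀ i, ∑ j, |K i j - L i j| ≤ ε) :
    ∑ j, |∑ i, p i * K i j - ∑ i, q i * L i j| ≤ ∑ i, |p i - q i| + ε := by
  calc ∑ j, |∑ i, p i * K i j - ∑ i, q i * L i j|
      = ∑ j, |∑ i, ((p i - q i) * K i j + q i * (K i j - L i j))| := by
        refine sum_congr rfl fun j _ => ?_
        rw [← sum_sub_distrib]; congr 1; exact sum_congr rfl fun i _ => by ring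
    _ ≤ ∑ j, ∑ i, (|p i - q i| * K i j + q i * |K i j - L i j|) := by
        refine sum_le_sum fun j _ => (abs_sum_le_sum_abs _ _).trans (sum_le_sum fun i _ => ?_)
        refine (abs_add_le _ _).trans_eq ?_
        rw [abs_mul, abs_mul, abs_of_nonneg ((hK i).1 j), abs_of_nonneg (hq.1 i)]
    _ = ∑ i, (|p i - q i| + q i * ∑ j, |K i j - L i j|) := by
        rw [sum_comm]
        simp_rw [sum_add_distrib, ← mul_sum, fun i => (hK i).2, mul_one]
    _ ≤ ∑ i, (|p i - q i| + q i * ε) := by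
        gcongr with i
        · exact hq.1 i
        · exact hKL i
    _ = ∑ i, |p i - q i| + ε := by rw [sum_add_distrib, ← sum_mul, hq.2, one_mul]

end Distributions

lemma abs_tsum_sub_tsum_le {ι : Type*} {f g b : ι → ℝ} {a : ℝ} (hf : Summable f)
    (hb : HasSum b a) (h : ∀ i, |f i - g i| ≤ b i) : |∑' i, f i - ∑' i, g i| ≤ a := by
  have h' : ∀ i, ‖f i - g i‖ ≤ b i := fun i => (Real.norm_eq_abs _).trans_le (h i)
  have hg : Summable g := by simpa using hf.sub (hb.summable.of_norm_bounded h')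
  rw [← hf.tsum_sub hg]
  exact tsum_of_norm_bounded hb h'

section MDP

variable {S A : Type*} [Fintype S] [Fintype A] {P P' : S → A → S → ℝ} {pol : S → A → ℝ}
  {d0 : S → ℝ}

noncomputable def stateActionDist (P : S → A → S → ℝ) (pol : S → A → ℝ) (d0 : S → ℝ) (t : ℕ) :
    S × A → ℝ :=
  fun x => stateDist P pol d0 t x.1 * pol x.1 x.2

lemma stateDist_succ (t : ℕ) (s' : S) :
    stateDist P pol d0 (t + 1) s' = ∑ x, stateActionDist P pol d0 t x * P x.1 x.2 s' := by
  rw [stateDist]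
  exact (Fintype.sum_prod_type' _).symm

lemma perf_eq_tsum_stateActionDist (R : S → A → ℝ) (γ : ℝ) :
    perf P R pol d0 γ = ∑' t, γ ^ t * ∑ x, stateActionDist P pol d0 t x * R x.1 x.2 := by
  simp_rw [perf, mul_sum, Fintype.sum_prod_type, stateActionDist, mul_assoc]

lemma isDist_stateDist (hd0 : IsDist d0) (hP : IsTransition P) (hpol : IsPolicy pol) :
    ∀ t, IsDist (stateDist P pol d0 t)
  | 0 => hd0
  | t + 1 => by
    have := ((isDist_stateDist hd0 hP hpol t).joint hpol).bind fun x => hP x.1 x.2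
    convert this using 1
    exact funext (stateDist_succ t)

lemma isDist_stateActionDist (hd0 : IsDist d0) (hP : IsTransition P) (hpol : IsPolicy pol)
    (t : ℕ) : IsDist (stateActionDist P pol d0 t) :=
  (isDist_stateDist hd0 hP hpol t).joint hpol

lemma sum_abs_stateActionDist_sub (hpol : IsPolicy pol) (t : ℕ) :
    ∑ x, |stateActionDist P pol d0 t x - stateActionDist P' pol d0 t x| =
      ∑ s, |stateDist P pol d0 t s - stateDist P' pol d0 t s| := by
  simp_rw [stateActionDist, ← sub_mul, abs_mul, Fintype.sum_prod_type,
    fun s a => abs_of_nonneg ((hpol s).1 a), ← mul_sum, fun s => (hpol s).2, mul_one]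

lemma sum_abs_stateDist_sub_le {εP : ℝ} (hd0 : IsDist d0) (hP : IsTransition P)
    (hP' : IsTransition P') (hpol : IsPolicy pol)
    (hPclose : ∀ s a, ∑ s', |P s a s' - P' s a s'| ≤ εP) :
    ∀ t : ℕ, ∑ s, |stateDist P pol d0 t s - stateDist P' pol d0 t s| ≤ t * εP
  | 0 => by simp [stateDist]
  | t + 1 => by
    simp_rw [stateDist_succ]
    calc _ ≤ ∑ x, |stateActionDist P pol d0 t x - stateActionDist P' pol d0 t x| + εP :=
          sum_abs_bind_sub_bind_le (isDist_stateActionDist hd0 hP' hpol t)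
            (fun x => hP x.1 x.2) fun x => hPclose x.1 x.2
      _ ≤ t * εP + εP := by
          rw [sum_abs_stateActionDist_sub hpol]
          gcongr
          exact sum_abs_stateDist_sub_le hd0 hP hP' hpol hPclose t
      _ = (t + 1 : ℕ) * εP := by push_cast; ring

lemma abs_expectedReward_sub_le {R R' : S → A → ℝ} {Rmax εP εR : ℝ} (hd0 : IsDist d0)
    (hP : IsTransition P) (hP' : IsTransition P') (hpol : IsPolicy pol)
    (hR : ∀ s a, |R s a| ≤ Rmax) (hPclose : ∀ s a, ∑ s', |P s a s' - P' s a s'| ≤ εP)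
    (hRclose : ∀ s a, |R s a - R' s a| ≤ εR) (t : ℕ) :
    |∑ x, stateActionDist P pol d0 t x * R x.1 x.2 -
        ∑ x, stateActionDist P' pol d0 t x * R' x.1 x.2| ≤ Rmax * (t * εP) + εR := by
  obtain ⟨x⟩ := (isDist_stateActionDist hd0 hP hpol t).nonempty
  have hRmax : 0 ≤ Rmax := (abs_nonneg _).trans (hR x.1 x.2)
  calc _ ≤ Rmax * ∑ x, |stateActionDist P pol d0 t x - stateActionDist P' pol d0 t x| + εR :=
        abs_sum_mul_sub_sum_mul_le (isDist_stateActionDist hd0 hP' hpol t)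
          (fun x => hR x.1 x.2) fun x => hRclose x.1 x.2
    _ ≤ Rmax * (t * εP) + εR := by
        rw [sum_abs_stateActionDist_sub hpol]
        gcongr
        exact sum_abs_stateDist_sub_le hd0 hP hP' hpol hPclose t

lemma summable_discounted_expectedReward {R : S → A → ℝ} {Rmax γ : ℝ} (hγ0 : 0 ≤ γ)
    (hγ1 : γ < 1) (hd0 : IsDist d0) (hP : IsTransition P) (hpol : IsPolicy pol)
    (hR : ∀ s a, |R s a| ≤ Rmax) :
    Summable fun t => γ ^ t * ∑ x, stateActionDist P pol d0 t x * R x.1 x.2 := by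
  refine ((summable_geometric_of_lt_one hγ0 hγ1).mul_right Rmax).of_norm_bounded fun t => ?_
  rw [Real.norm_eq_abs, abs_mul, abs_pow, abs_of_nonneg hγ0]
  gcongr
  exact (isDist_stateActionDist hd0 hP hpol t).abs_sum_mul_le fun x => hR x.1 x.2

end MDP

theorem perf_diff_close_mdps_general
    {S A : Type*} [Fintype S] [Fintype A]
    (γ Rmax εP εR : ℝ) (hγ0 : 0 ≤ γ) (hγ1 : γ < 1)
    (d0 : S → ℝ) (hd0 : IsDist d0)
    (P P' : S → A → S → ℝ) (R R' : S → A → ℝ)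
    (hP : IsTransition P) (hP' : IsTransition P')
    (hR : ∀ s a, |R s a| ≤ Rmax)
    (hPclose : ∀ s a, ∑ s' : S, |P s a s' - P' s a s'| ≤ εP)
    (hRclose : ∀ s a, |R s a - R' s a| ≤ εR)
    (pol : S → A → ℝ) (hpol : IsPolicy pol) :
    |perf P R pol d0 γ - perf P' R' pol d0 γ| ≤
      γ * Rmax * εP / (1 - γ) ^ 2 + εR / (1 - γ) := by
  have hγ : ‖γ‖ < 1 := by rwa [Real.norm_of_nonneg hγ0]
  have hbound : HasSum (fun t : ℕ => Rmax * εP * (t * γ ^ t) + εR * γ ^ t)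
      (Rmax * εP * (γ / (1 - γ) ^ 2) + εR * (1 - γ)⁻¹) :=
    ((hasSum_coe_mul_geometric_of_norm_lt_one hγ).mul_left _).add
      ((hasSum_geometric_of_lt_one hγ0 hγ1).mul_left _)
  rw [perf_eq_tsum_stateActionDist, perf_eq_tsum_stateActionDist]
  calc _ ≤ Rmax * εP * (γ / (1 - γ) ^ 2) + εR * (1 - γ)⁻¹ :=
        abs_tsum_sub_tsum_le (summable_discounted_expectedReward hγ0 hγ1 hd0 hP hpol hR)
          hbound fun t => ?_
    _ = γ * Rmax * εP / (1 - γ) ^ 2 + εR / (1 - γ) := by ring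
  rw [← mul_sub, abs_mul, abs_pow, abs_of_nonneg hγ0]
  calc _ ≤ γ ^ t * (Rmax * (t * εP) + εR) := by
        gcongr
        exact abs_expectedReward_sub_le hd0 hP hP' hpol hR hPclose hRclose t
    _ = Rmax * εP * (t * γ ^ t) + εR * γ ^ t := by ring

/-- **Performance difference bound for two close MDPs**: if the transitions of `M` and `M'`
are within `εP` in L1 distance and the mean rewards within `εR`, then for every policy
`|ρ(π, M) − ρ(π, M')| ≤ γ·Rmax·εP/(1−γ)² + εR/(1−γ)`. -/
theorem perf_diff_close_mdps
    {S A : Type*} [Fintype S] [Fintype A]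
    (γ Rmax εP εR : ℝ) (hγ0 : 0 ≤ γ) (hγ1 : γ < 1)
    (d0 : S → ℝ) (hd0 : IsDist d0)
    (P P' : S → A → S → ℝ) (R R' : S → A → ℝ)
    (hP : IsTransition P) (hP' : IsTransition P')
    (hR : ∀ s a, |R s a| ≤ Rmax) (hR' : ∀ s a, |R' s a| ≤ Rmax)
    (hPclose : ∀ s a, ∑ s' : S, |P s a s' - P' s a s'| ≤ εP)
    (hRclose : ∀ s a, |R s a - R' s a| ≤ εR)
    (pol : S → A → ℝ) (hpol : IsPolicy pol) :
    |perf P R pol d0 γ - perf P' R' pol d0 γ| ≤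
      γ * Rmax * εP / (1 - γ) ^ 2 + εR / (1 - γ) :=
  perf_diff_close_mdps_general γ Rmax εP εR hγ0 hγ1 d0 hd0 P P' R R' hP hP' hR hPclose hRclose pol
    hpol
end

section
/- Let M be a finite MDP with state set S, action set A, transition function P, mean reward function R, discount factor γ ∈ [0,1), start-state distribution d₀, and fixed horizon T. Let β and π be two policies such that β has full support: there exists C > 0 with β(a|s) ≥ C for all s ∈ S, a ∈ A. Let H = (S₀, A₀, R₀, …, S_{T−1}, A_{T−1}, R_{T−1}) be a trajectory generated by running β in M (S₀ ∼ d₀, A_t ∼ β(·|S_t), S_{t+1} ∼ P(·|S_t, A_t), with E[R_t | S_t, A_t] = R(S_t, A_t)). Then the per-decision importance sampling estimator is unbiased for π's finite-horizon performance: E_β[ ∑_{t=0}^{T−1} ( ∏_{l=0}^{t} π(A_l|S_l)/β(A_l|S_l) ) γ^t R_t ] = E_π[ ∑_{t=0}^{T−1} γ^t R_t ], where the right-hand expectation is over trajectories generated by running π in M. -/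
open scoped BigOperators

/-- The probability of a horizon-`T` trajectory `(S₀, A₀, S₁, A₁, …, S_{T−1}, A_{T−1}, S_T)`
when running policy `pol` from start-state distribution `d0` in an MDP with transition
function `P`:  `d₀(S₀) · ∏_{t<T} π(A_t|S_t) · P(S_{t+1}|S_t, A_t)`. -/
noncomputable def trajProb {S A : Type*} {T : ℕ}
    (P : S → A → S → ℝ) (pol : S → A → ℝ) (d0 : S → ℝ)
    (s : Fin (T + 1) → S) (a : Fin T → A) : ℝ :=
  d0 (s 0) * ∏ t : Fin T, (pol (s t.castSucc) (a t) * P (s t.castSucc) (a t) (s t.succ))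


/-!
Fix a time `t`. Multiplying the probability of a path under `β` by the ratios `π/β` up to
time `t` turns it into the probability of the path that follows `π` up to time `t` and `β`
afterwards. The `t`-th reward only sees the path up to time `t`, and summing out the tail of
a path drawn from normalized kernels gives a factor `1`, so the policy followed after time
`t` is irrelevant: the `t`-th term has the same expectation as under `π`.
-/

theorem Fintype.sum_pi_fin_succ {M X : Type*} [AddCommMonoid M] [Fintype X] {n : ℕ}
    (g : (Fin (n + 1) → X) → M) :
    ∑ f : Fin (n + 1) → X, g f = ∑ x : X, ∑ f : Fin n → X, g (Fin.cons x f) := by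
  rw [← (Fin.consEquiv fun _ => X).sum_comp g, Fintype.sum_prod_type]
  rfl

section PathSum

variable {S A : Type*} [Fintype S] [Fintype A]

noncomputable def pathSum {T : ℕ} (d : S → ℝ) (w : Fin T → S → A → S → ℝ)
    (F : (Fin (T + 1) → S) → (Fin T → A) → ℝ) : ℝ :=
  ∑ s : Fin (T + 1) → S, ∑ a : Fin T → A,
    d (s 0) * (∏ l : Fin T, w l (s l.castSucc) (a l) (s l.succ)) * F s a

theorem pathSum_succ {T : ℕ} (d : S → ℝ) (w : Fin (T + 1) → S → A → S → ℝ)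
    (F : (Fin (T + 2) → S) → (Fin (T + 1) → A) → ℝ) :
    pathSum d w F = ∑ x : S, ∑ b : A, d x *
      pathSum (w 0 x b) (fun l => w l.succ) (fun s a => F (Fin.cons x s) (Fin.cons b a)) := by
  unfold pathSum
  rw [Fintype.sum_pi_fin_succ]
  refine Finset.sum_congr rfl fun x _ => ?_
  simp only [Fintype.sum_pi_fin_succ (X := A), Finset.mul_sum]
  rw [Finset.sum_comm]
  refine Finset.sum_congr rfl fun b _ => Finset.sum_congr rfl fun s _ =>
    Finset.sum_congr rfl fun a _ => ?_
  rw [Fin.prod_univ_succ]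
  simp only [Fin.cons_zero, Fin.castSucc_zero, ← Fin.succ_castSucc, Fin.cons_succ]
  ring

theorem pathSum_const {T : ℕ} (d : S → ℝ) (w : Fin T → S → A → S → ℝ)
    (hw : ∀ l s, ∑ a, ∑ s', w l s a s' = 1) (c : ℝ) :
    pathSum d w (fun _ _ => c) = c * ∑ x, d x := by
  induction T generalizing d with
  | zero => simp [pathSum, Fintype.sum_pi_fin_succ, Finset.mul_sum, mul_comm]
  | succ T ih =>
    calc pathSum d w (fun _ _ => c)
        = ∑ x, ∑ b, d x * (c * ∑ y, w 0 x b y) := by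
          rw [pathSum_succ]; simp only [ih _ _ fun l => hw l.succ]
      _ = c * ∑ x, d x * ∑ b, ∑ y, w 0 x b y := by
          simp only [Finset.mul_sum, mul_left_comm c]
      _ = c * ∑ x, d x := by simp only [hw 0, mul_one]

theorem pathSum_eq_of_eq_of_le {T : ℕ} (d : S → ℝ) {w w' : Fin T → S → A → S → ℝ}
    (t : Fin T) (g : S → A → ℝ) (heq : ∀ l ≤ t, w l = w' l)
    (hw : ∀ l, t < l → ∀ s, ∑ a, ∑ s', w l s a s' = 1)
    (hw' : ∀ l, t < l → ∀ s, ∑ a, ∑ s', w' l s a s' = 1) :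
    pathSum d w (fun s a => g (s t.castSucc) (a t)) =
      pathSum d w' (fun s a => g (s t.castSucc) (a t)) := by
  induction T generalizing d with
  | zero => exact t.elim0
  | succ T ih =>
    rw [pathSum_succ, pathSum_succ, heq 0 (Fin.zero_le t)]
    refine Finset.sum_congr rfl fun x _ => Finset.sum_congr rfl fun b _ => ?_
    congr 1
    induction t using Fin.cases with
    | zero =>
      simp only [Fin.castSucc_zero, Fin.cons_zero]
      rw [pathSum_const _ _ fun l => hw l.succ l.succ_pos,
        pathSum_const _ _ fun l => hw' l.succ l.succ_pos]
    | succ j =>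
      simp only [← Fin.succ_castSucc, Fin.cons_succ]
      exact ih _ j (fun l hl => heq l.succ (Fin.succ_le_succ_iff.mpr hl))
        (fun l hl => hw l.succ (Fin.succ_lt_succ_iff.mpr hl))
        (fun l hl => hw' l.succ (Fin.succ_lt_succ_iff.mpr hl))

end PathSum

section PDIS

variable {S A : Type*}

def policyKernel (P : S → A → S → ℝ) (pol : S → A → ℝ) (s : S) (a : A) (s' : S) : ℝ :=
  pol s a * P s a s'

theorem trajProb_mul_prod_div {T : ℕ} (P : S → A → S → ℝ) (d0 : S → ℝ) {π β : S → A → ℝ}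
    (hβ : ∀ s a, β s a ≠ 0) (t : Fin T) (s : Fin (T + 1) → S) (a : Fin T → A) :
    trajProb P β d0 s a * ∏ l ∈ Finset.Iic t, π (s l.castSucc) (a l) / β (s l.castSucc) (a l) =
      d0 (s 0) * ∏ l, policyKernel P (if l ≤ t then π else β)
        (s l.castSucc) (a l) (s l.succ) := by
  rw [trajProb, ← Fintype.prod_extend_by_one (Finset.Iic t), mul_assoc,
    ← Finset.prod_mul_distrib]
  congr 1
  refine Finset.prod_congr rfl fun l _ => ?_
  simp only [Finset.mem_Iic, policyKernel]
  split_ifs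
  · field_simp [hβ]
  · rw [mul_one]

variable [Fintype S] [Fintype A]

theorem sum_policyKernel {P : S → A → S → ℝ} {pol : S → A → ℝ} (hP : IsTransition P)
    (hpol : IsPolicy pol) (s : S) : ∑ a, ∑ s', policyKernel P pol s a s' = 1 := by
  simp only [policyKernel, ← Finset.mul_sum, (hP s _).2, mul_one, (hpol s).2]

theorem sum_trajProb_mul {T : ℕ} (P : S → A → S → ℝ) (pol : S → A → ℝ) (d0 : S → ℝ)
    (F : (Fin (T + 1) → S) → (Fin T → A) → ℝ) :
    ∑ s, ∑ a, trajProb P pol d0 s a * F s a = pathSum d0 (fun _ => policyKernel P pol) F :=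
  rfl

theorem pdis_term_unbiased {T : ℕ} {P : S → A → S → ℝ} (hP : IsTransition P) (d0 : S → ℝ)
    {π β : S → A → ℝ} (hπ : IsPolicy π) (hβ : IsPolicy β) (hβ0 : ∀ s a, β s a ≠ 0)
    (t : Fin T) (g : S → A → ℝ) :
    ∑ s, ∑ a, trajProb P β d0 s a *
        ((∏ l ∈ Finset.Iic t, π (s l.castSucc) (a l) / β (s l.castSucc) (a l)) *
          g (s t.castSucc) (a t)) =
      ∑ s, ∑ a, trajProb P π d0 s a * g (s t.castSucc) (a t) := by
  simp only [← mul_assoc, trajProb_mul_prod_div P d0 hβ0]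
  rw [sum_trajProb_mul]
  refine pathSum_eq_of_eq_of_le d0 t g (fun l hl => by simp only [if_pos hl]) ?_
    fun l _ => sum_policyKernel hP hπ
  intro l hl
  simpa only [if_neg hl.not_ge] using sum_policyKernel hP hβ

end PDIS

theorem pdis_unbiased_general
    {S A : Type*} [Fintype S] [Fintype A]
    (T : ℕ) (γ : ℝ)
    (P : S → A → S → ℝ) (hP : IsTransition P)
    (R : S → A → ℝ)
    (d0 : S → ℝ)
    (π β : S → A → ℝ) (hπ : IsPolicy π) (hβ : IsPolicy β)
    (hsupp : ∃ C > (0 : ℝ), ∀ s a, C ≤ β s a) :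
    ∑ s : Fin (T + 1) → S, ∑ a : Fin T → A,
      trajProb P β d0 s a *
        ∑ t : Fin T,
          (∏ l ∈ Finset.Iic t, π (s l.castSucc) (a l) / β (s l.castSucc) (a l)) *
            γ ^ (t : ℕ) * R (s t.castSucc) (a t) =
    ∑ s : Fin (T + 1) → S, ∑ a : Fin T → A,
      trajProb P π d0 s a * ∑ t : Fin T, γ ^ (t : ℕ) * R (s t.castSucc) (a t) := by
  obtain ⟨C, hC, hCβ⟩ := hsupp
  have hβ0 : ∀ s a, β s a ≠ 0 := fun s a => (hC.trans_le (hCβ s a)).ne'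
  simp only [Finset.mul_sum, mul_assoc]
  rw [Finset.sum_comm_cycle, Finset.sum_comm_cycle (s := Finset.univ (α := Fin (T + 1) → S))]
  exact Finset.sum_congr rfl fun t _ =>
    pdis_term_unbiased hP d0 hπ hβ hβ0 t fun x b => γ ^ (t : ℕ) * R x b

/-- **Unbiasedness of per-decision importance sampling**: if the behavior policy `β` has
full support (`β(a|s) ≥ C > 0` for all `s, a`), then the expectation under trajectories
generated by `β` of `∑_{t<T} ( ∏_{l≤t} π(A_l|S_l)/β(A_l|S_l) ) γ^t R(S_t, A_t)` equals
the expectation under trajectories generated by `π` of `∑_{t<T} γ^t R(S_t, A_t)`, i.e.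
the finite-horizon performance of `π`. -/
theorem pdis_unbiased
    {S A : Type*} [Fintype S] [Fintype A] [DecidableEq S] [DecidableEq A]
    (T : ℕ) (γ : ℝ) (hγ0 : 0 ≤ γ) (hγ1 : γ < 1)
    (P : S → A → S → ℝ) (hP : IsTransition P)
    (R : S → A → ℝ)
    (d0 : S → ℝ) (hd0 : IsDist d0)
    (π β : S → A → ℝ) (hπ : IsPolicy π) (hβ : IsPolicy β)
    (hsupp : ∃ C > (0 : ℝ), ∀ s a, C ≤ β s a) :
    ∑ s : Fin (T + 1) → S, ∑ a : Fin T → A,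
      trajProb P β d0 s a *
        ∑ t : Fin T,
          (∏ l ∈ Finset.Iic t, π (s l.castSucc) (a l) / β (s l.castSucc) (a l)) *
            γ ^ (t : ℕ) * R (s t.castSucc) (a t) =
    ∑ s : Fin (T + 1) → S, ∑ a : Fin T → A,
      trajProb P π d0 s a * ∑ t : Fin T, γ ^ (t : ℕ) * R (s t.castSucc) (a t) :=
  pdis_unbiased_general T γ P hP R d0 π β hπ hβ hsupp
end
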